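/- Let ψ₂(x) = (x−1)/(x+1). For probability densities s, q, q' with respect to μ, ∫ ψ₂²(√(q'/q)) s dμ ≤ 3√2 [h²(s,q) + h²(s,q')]. -/

import Mathlib

/-!
Writing `a = √s`, `b = √q`, `c = √q'`, the integrand is `((c - b)/(c + b))² a²`, and the identity
`(c + b)² ((a - b)² + (a - c)²) - (c - b)² a² = (c - b)² (a - b - c)² + 2bc (2a - b - c)²`
bounds it pointwise by `(a - b)² + (a - c)²`. Integrating gives the bound `2 (h²(s,q) + h²(s,q'))`,
and `2 ≤ 3√2`.
-/

open MeasureTheory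

/-- The squared Hellinger distance between the probability measures with
densities `a` and `b` with respect to `μ`. -/
noncomputable def H2 {α : Type*} [MeasurableSpace α] (μ : Measure α) (a b : α → ℝ) : ℝ :=
  (1 / 2) * ∫ x, (Real.sqrt (a x) - Real.sqrt (b x)) ^ 2 ∂μ

/-- `ψ₂(√(q'/q))` evaluated with the conventions `0/0 = 1` (giving `ψ₂(1) = 0`)
and `a/0 = +∞` for `a > 0` (giving `ψ₂(+∞) = 1`), where `ψ₂(x) = (x-1)/(x+1)`. -/
noncomputable def psi2Ratio {α : Type*} (q q' : α → ℝ) (x : α) : ℝ :=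
  if q x = 0 then (if q' x = 0 then 0 else 1)
  else (Real.sqrt (q' x / q x) - 1) / (Real.sqrt (q' x / q x) + 1)

lemma H2_nonneg {α : Type*} [MeasurableSpace α] (μ : Measure α) (a b : α → ℝ) :
    0 ≤ H2 μ a b := by
  unfold H2
  positivity

lemma psi2Ratio_eq {α : Type*} {q q' : α → ℝ} {x : α} (hq : 0 ≤ q x) (hq' : 0 ≤ q' x) :
    psi2Ratio q q' x = (√(q' x) - √(q x)) / (√(q' x) + √(q x)) := by
  unfold psi2Ratio
  rcases hq.eq_or_lt with hq_zero | hq_pos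
  · rw [if_pos hq_zero.symm, ← hq_zero, Real.sqrt_zero, sub_zero, add_zero]
    rcases hq'.eq_or_lt with hq'_zero | hq'_pos
    · simp [← hq'_zero]
    · rw [if_neg hq'_pos.ne', div_self (Real.sqrt_pos.2 hq'_pos).ne']
  · have : 0 < √(q x) := Real.sqrt_pos.2 hq_pos
    rw [if_neg hq_pos.ne', Real.sqrt_div hq']
    field_simp

lemma sq_sub_div_add_mul_sq_le {a b c : ℝ} (hb : 0 ≤ b) (hc : 0 ≤ c) :
    ((c - b) / (c + b)) ^ 2 * a ^ 2 ≤ (a - b) ^ 2 + (a - c) ^ 2 := by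
  rcases (add_nonneg hc hb).eq_or_lt with hbc | hbc
  · rw [← hbc, div_zero, zero_pow two_ne_zero, zero_mul]
    positivity
  have identity : (c + b) ^ 2 * ((a - b) ^ 2 + (a - c) ^ 2) - (c - b) ^ 2 * a ^ 2
      = (c - b) ^ 2 * (a - b - c) ^ 2 + 2 * b * c * (2 * a - b - c) ^ 2 := by ring
  rw [div_pow, div_mul_eq_mul_div, div_le_iff₀ (by positivity)]
  have : 0 ≤ (c - b) ^ 2 * (a - b - c) ^ 2 + 2 * b * c * (2 * a - b - c) ^ 2 := by positivity
  linarith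

lemma sq_psi2Ratio_mul_le {α : Type*} {s q q' : α → ℝ} {x : α}
    (hs : 0 ≤ s x) (hq : 0 ≤ q x) (hq' : 0 ≤ q' x) :
    psi2Ratio q q' x ^ 2 * s x ≤ (√(s x) - √(q x)) ^ 2 + (√(s x) - √(q' x)) ^ 2 := by
  have := sq_sub_div_add_mul_sq_le (a := √(s x)) (Real.sqrt_nonneg (q x)) (Real.sqrt_nonneg (q' x))
  rwa [Real.sq_sqrt hs, ← psi2Ratio_eq hq hq'] at this

lemma sq_sqrt_sub_sqrt_le (x y : ℝ) : (√x - √y) ^ 2 ≤ 2 * (|x| + |y|) := by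
  have hx : √x ^ 2 ≤ |x| := by rw [Real.sq_sqrt']; exact max_le (le_abs_self x) (abs_nonneg x)
  have hy : √y ^ 2 ≤ |y| := by rw [Real.sq_sqrt']; exact max_le (le_abs_self y) (abs_nonneg y)
  nlinarith [sq_nonneg (√x + √y)]

lemma integrable_sq_sqrt_sub_sqrt {α : Type*} [MeasurableSpace α] {μ : Measure α}
    {f g : α → ℝ} (hf : Integrable f μ) (hg : Integrable g μ) :
    Integrable (fun x => (√(f x) - √(g x)) ^ 2) μ := by
  have hmeas : AEStronglyMeasurable (fun x => (√(f x) - √(g x)) ^ 2) μ :=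
    ((Real.continuous_sqrt.comp_aestronglyMeasurable hf.aestronglyMeasurable).sub
      (Real.continuous_sqrt.comp_aestronglyMeasurable hg.aestronglyMeasurable)).pow 2
  refine Integrable.mono' ((hf.norm.add hg.norm).const_mul 2) hmeas (ae_of_all _ fun x => ?_)
  rw [Real.norm_eq_abs, abs_of_nonneg (sq_nonneg _)]
  exact sq_sqrt_sub_sqrt_le (f x) (g x)

theorem integral_sq_psi2Ratio_mul_le_two_mul {α : Type*} [MeasurableSpace α] {μ : Measure α}
    {s q q' : α → ℝ} (hs : Integrable s μ) (hq : Integrable q μ) (hq' : Integrable q' μ)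
    (hs0 : ∀ x, 0 ≤ s x) (hq0 : ∀ x, 0 ≤ q x) (hq'0 : ∀ x, 0 ≤ q' x) :
    ∫ x, psi2Ratio q q' x ^ 2 * s x ∂μ ≤ 2 * (H2 μ s q + H2 μ s q') := by
  have hsq := integrable_sq_sqrt_sub_sqrt hs hq
  have hsq' := integrable_sq_sqrt_sub_sqrt hs hq'
  calc ∫ x, psi2Ratio q q' x ^ 2 * s x ∂μ
      ≤ ∫ x, ((√(s x) - √(q x)) ^ 2 + (√(s x) - √(q' x)) ^ 2) ∂μ :=
        integral_mono_of_nonneg (ae_of_all _ fun x => mul_nonneg (sq_nonneg _) (hs0 x))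
          (hsq.add hsq') (ae_of_all _ fun x => sq_psi2Ratio_mul_le (hs0 x) (hq0 x) (hq'0 x))
    _ = 2 * (H2 μ s q + H2 μ s q') := by
        rw [integral_add hsq hsq', H2, H2]
        ring

theorem stmt13_general {α : Type*} [MeasurableSpace α] (μ : Measure α) (s q q' : α → ℝ)
    (hs0 : ∀ x, 0 ≤ s x) (hq0 : ∀ x, 0 ≤ q x) (hq'0 : ∀ x, 0 ≤ q' x)
    (hsint : ∫ x, s x ∂μ = 1) (hqint : ∫ x, q x ∂μ = 1) (hq'int : ∫ x, q' x ∂μ = 1) :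
    ∫ x, (psi2Ratio q q' x) ^ 2 * s x ∂μ
      ≤ 3 * Real.sqrt 2 * (H2 μ s q + H2 μ s q') := by
  have hs := Integrable.of_integral_ne_zero (hsint ▸ one_ne_zero)
  have hq := Integrable.of_integral_ne_zero (hqint ▸ one_ne_zero)
  have hq' := Integrable.of_integral_ne_zero (hq'int ▸ one_ne_zero)
  have hH2 : 0 ≤ H2 μ s q + H2 μ s q' := add_nonneg (H2_nonneg μ s q) (H2_nonneg μ s q')
  have two_le : (2 : ℝ) ≤ 3 * √2 := by
    nlinarith [Real.sq_sqrt (show (0 : ℝ) ≤ 2 by norm_num), Real.sqrt_nonneg 2]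
  calc _ ≤ 2 * (H2 μ s q + H2 μ s q') :=
        integral_sq_psi2Ratio_mul_le_two_mul hs hq hq' hs0 hq0 hq'0
    _ ≤ 3 * √2 * (H2 μ s q + H2 μ s q') := mul_le_mul_of_nonneg_right two_le hH2

theorem stmt13 {α : Type*} [MeasurableSpace α] (μ : Measure α) (s q q' : α → ℝ)
    (hs : Measurable s) (hq : Measurable q) (hq' : Measurable q')
    (hs0 : ∀ x, 0 ≤ s x) (hq0 : ∀ x, 0 ≤ q x) (hq'0 : ∀ x, 0 ≤ q' x)
    (hsint : ∫ x, s x ∂μ = 1) (hqint : ∫ x, q x ∂μ = 1) (hq'int : ∫ x, q' x ∂μ = 1) :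
    ∫ x, (psi2Ratio q q' x) ^ 2 * s x ∂μ
      ≤ 3 * Real.sqrt 2 * (H2 μ s q + H2 μ s q') :=
  stmt13_general μ s q q' hs0 hq0 hq'0 hsint hqint hq'int
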